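/- arXiv:1408.3092 — 3 statements merged into one kernel-verified Lean document; each statement's English description precedes it below -/
import Mathlib

section
/- Let g be a d-dimensional Gaussian random vector with mean zero and covariance σ²I_d (σ > 0). Then for every ε with 0 < ε ≤ σ√d, P(‖g‖₂ ≤ ε) ≥ (ε/(3σ√d))^d. -/
/-!
With `t = ε / √d`, the cube `[-t, t]^d` lies in the ball of radius `ε`, and its product measure is
the `d`-th power of the one-dimensional mass of `[-t, t]`. As `t ≤ σ`, the Gaussian density on
`[-t, t]` is at least `e^{-1/2} / (σ √(2π))`, so that mass is at least
`2t e^{-1/2} / (σ √(2π)) ≥ t / (3σ)`, because `√(2π) e^{1/2} ≤ 3 · 2`.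
-/

open MeasureTheory ProbabilityTheory Real Set NNReal

lemma sqrt_two_pi_mul_exp_half_le_six : √(2 * π) * exp (1 / 2) ≤ 6 := by
  have hsqrt : √(2 * π) ≤ 3 := by
    rw [sqrt_le_iff]; constructor <;> nlinarith [pi_lt_d2]
  have hexp : exp (1 / 2) ≤ 2 := by
    have : exp (1 / 2) * exp (1 / 2) = exp 1 := by rw [← exp_add]; norm_num
    nlinarith [exp_one_lt_d9, exp_pos (1 / 2)]
  nlinarith [sqrt_nonneg (2 * π), exp_pos (1 / 2)]

lemma sqrt_two_pi_inv_mul_exp_neg_half_le_gaussianPDFReal (μ : ℝ) (v : ℝ≥0) {x : ℝ}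
    (hx : (x - μ) ^ 2 ≤ v) :
    (√(2 * π * v))⁻¹ * exp (-(1 / 2)) ≤ gaussianPDFReal μ v x := by
  rw [gaussianPDFReal]
  gcongr
  rw [neg_div, neg_le_neg_iff]
  rcases eq_or_ne (v : ℝ) 0 with hv | hv
  · simp [hv] -- the exponent is `-(x - μ) ^ 2 / 0 = 0`
  · rw [div_le_iff₀ (by positivity)]
    linarith

lemma ofReal_le_gaussianReal_Icc (μ : ℝ) (σ : ℝ≥0) {t : ℝ} (htσ : t ≤ σ) :
    ENNReal.ofReal ((√(2 * π * (σ ^ 2 : ℝ≥0)))⁻¹ * exp (-(1 / 2)) * (2 * t)) ≤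
      gaussianReal μ (σ ^ 2) (Icc (μ - t) (μ + t)) := by
  rcases eq_or_ne σ 0 with rfl | hσ
  · simp
  have hpdf : ∀ x ∈ Icc (μ - t) (μ + t),
      ENNReal.ofReal ((√(2 * π * (σ ^ 2 : ℝ≥0)))⁻¹ * exp (-(1 / 2))) ≤ gaussianPDF μ (σ ^ 2) x := by
    intro x hx
    refine ENNReal.ofReal_le_ofReal (sqrt_two_pi_inv_mul_exp_neg_half_le_gaussianPDFReal _ _ ?_)
    have : |x - μ| ≤ σ := abs_sub_le_iff.mpr ⟨by linarith [hx.2], by linarith [hx.1]⟩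
    push_cast
    nlinarith [abs_nonneg (x - μ), sq_abs (x - μ)]
  calc _ = ∫⁻ _ in Icc (μ - t) (μ + t),
        ENNReal.ofReal ((√(2 * π * (σ ^ 2 : ℝ≥0)))⁻¹ * exp (-(1 / 2))) := by
        rw [setLIntegral_const, Real.volume_Icc, ← ENNReal.ofReal_mul (by positivity)]
        ring_nf
    _ ≤ ∫⁻ x in Icc (μ - t) (μ + t), gaussianPDF μ (σ ^ 2) x :=
        setLIntegral_mono (measurable_gaussianPDF _ _) hpdf
    _ = _ := (gaussianReal_apply μ (pow_ne_zero 2 hσ) _).symm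

lemma ofReal_div_three_mul_le_gaussianReal_Icc (μ : ℝ) (σ : ℝ≥0) {t : ℝ} (ht : 0 ≤ t)
    (htσ : t ≤ σ) :
    ENNReal.ofReal (t / (3 * σ)) ≤ gaussianReal μ (σ ^ 2) (Icc (μ - t) (μ + t)) := by
  refine le_trans (ENNReal.ofReal_le_ofReal ?_) (ofReal_le_gaussianReal_Icc μ σ htσ)
  rcases eq_or_lt_of_le σ.coe_nonneg with hσ | hσ
  · simp [← hσ]
  have hsqrt : √(2 * π * (σ ^ 2 : ℝ≥0)) = √(2 * π) * σ := by
    push_cast; rw [sqrt_mul (by positivity), sqrt_sq hσ.le]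
  rw [hsqrt, exp_neg, div_le_iff₀ (by positivity)]
  have hconst := sqrt_two_pi_mul_exp_half_le_six
  field_simp
  nlinarith [sqrt_nonneg (2 * π), exp_pos (1 / 2)]

lemma sum_sq_le_card_mul_sq {ι : Type*} [Fintype ι] {x : ι → ℝ} {t : ℝ}
    (hx : ∀ i, |x i| ≤ t) : ∑ i, x i ^ 2 ≤ Fintype.card ι * t ^ 2 := by
  calc ∑ i, x i ^ 2 ≤ ∑ _i : ι, t ^ 2 :=
        Finset.sum_le_sum fun i _ => sq_le_sq' (abs_le.mp (hx i)).1 (abs_le.mp (hx i)).2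
    _ = _ := by simp

theorem gaussian_small_ball_general (d : ℕ) (σ : NNReal)
    (ε : ℝ) (hε : 0 < ε) (hεd : ε ≤ (σ : ℝ) * Real.sqrt d) :
    ENNReal.ofReal ((ε / (3 * (σ : ℝ) * Real.sqrt d)) ^ d) ≤
      (Measure.pi fun _ : Fin d => gaussianReal 0 (σ ^ 2))
        {x | Real.sqrt (∑ i, (x i) ^ 2) ≤ ε} := by
  rcases Nat.eq_zero_or_pos d with rfl | hd
  · simp at hεd; linarith
  have hsqrt_d : 0 < √(d : ℝ) := sqrt_pos.mpr (by exact_mod_cast hd)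
  set t := ε / √(d : ℝ) with ht
  have hcube : univ.pi (fun _ : Fin d => Icc (-t) t) ⊆ {x | √(∑ i, x i ^ 2) ≤ ε} := by
    intro x hx
    have hsum := sum_sq_le_card_mul_sq fun i => abs_le.mpr (hx i trivial)
    rw [Fintype.card_fin, ht, div_pow, sq_sqrt d.cast_nonneg,
      mul_div_cancel₀ _ (by positivity)] at hsum
    exact (sqrt_le_left hε.le).mpr hsum
  have hinterval : ENNReal.ofReal (t / (3 * σ)) ≤ gaussianReal 0 (σ ^ 2) (Icc (-t) t) := by
    simpa using ofReal_div_three_mul_le_gaussianReal_Icc 0 σ (by positivity)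
      ((div_le_iff₀ hsqrt_d).mpr hεd)
  calc ENNReal.ofReal ((ε / (3 * σ * √(d : ℝ))) ^ d)
      = ENNReal.ofReal (t / (3 * σ)) ^ d := by
        rw [ENNReal.ofReal_pow (by positivity), ht, div_div, mul_comm (√(d : ℝ))]
    _ ≤ gaussianReal 0 (σ ^ 2) (Icc (-t) t) ^ d := by gcongr
    _ = (Measure.pi fun _ : Fin d => gaussianReal 0 (σ ^ 2)) (univ.pi fun _ => Icc (-t) t) := by
        rw [Measure.pi_pi, Finset.prod_const, Finset.card_univ, Fintype.card_fin]
    _ ≤ _ := measure_mono hcube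

/-- small ball probability of a `d`-dimensional Gaussian vector with
independent `N(0,σ²)` coordinates. -/
theorem gaussian_small_ball (d : ℕ) (σ : NNReal) (hσ : 0 < σ)
    (ε : ℝ) (hε : 0 < ε) (hεd : ε ≤ (σ : ℝ) * Real.sqrt d) :
    ENNReal.ofReal ((ε / (3 * (σ : ℝ) * Real.sqrt d)) ^ d) ≤
      (Measure.pi fun _ : Fin d => gaussianReal 0 (σ ^ 2))
        {x | Real.sqrt (∑ i, (x i) ^ 2) ≤ ε} :=
  gaussian_small_ball_general d σ ε hε hεd
end

section
/- For all real a > 0, c > 0 and every integer K ≥ 1, ∫_{a}^{∞} x · exp(−c x^{2/K}) dx = (1/2) Σ_{i=1}^{K} (K(K−1)⋯(K−i+1)/c^{i}) · a^{2(K−i)/K} · exp(−c a^{2/K}). -/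
/-!
Substituting `u = x ^ (2 / K)` turns `x * exp (-c * x ^ (2 / K)) dx` into
`(K / 2) * u ^ (K - 1) * exp (-c * u) du`, whose antiderivative `-P(u) * exp (-c * u)` has the
polynomial `P(u) = ∑ᵢ K! / (K - i)! * u ^ (K - i) / c ^ i` (from `P = (K / c) * (u ^ (K - 1) + P_{K-1})`
and induction). So `-(1/2) * P(x ^ (2 / K)) * exp (-c * x ^ (2 / K))` is an antiderivative of the
integrand that vanishes at infinity, and the fundamental theorem of calculus on `[a, ∞)` gives the
value.
-/

open MeasureTheory Finset Filter Real Topology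

/-- `upperGammaPoly n c b * exp (-c * b) = ∫ u in Ioi b, n * u ^ (n - 1) * exp (-c * u)` for `c > 0`:
the upper incomplete gamma function at an integer, in closed form. -/
noncomputable def upperGammaPoly (n : ℕ) (c u : ℝ) : ℝ :=
  ∑ i ∈ Icc 1 n, (n.factorial / (n - i).factorial / c ^ i : ℝ) * u ^ (n - i)

theorem sum_Icc_one_eq_sum_range {M : Type*} [AddCommMonoid M] (n : ℕ) (f : ℕ → M) :
    ∑ i ∈ Icc 1 n, f i = ∑ j ∈ range n, f (j + 1) := by
  rw [← Ico_add_one_right_eq_Icc, sum_Ico_eq_sum_range, Nat.add_sub_cancel]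
  simp only [add_comm 1]

theorem upperGammaPoly_succ {c : ℝ} (hc : c ≠ 0) (n : ℕ) (u : ℝ) :
    upperGammaPoly (n + 1) c u = (n + 1) / c * (u ^ n + upperGammaPoly n c u) := by
  simp only [upperGammaPoly, sum_Icc_one_eq_sum_range, sum_range_succ', mul_add, mul_sum]
  rw [add_comm]
  congr 1
  · rw [zero_add, Nat.add_sub_cancel, Nat.factorial_succ, pow_one]
    push_cast
    field_simp
  · refine sum_congr rfl fun j _ => ?_
    rw [show n + 1 - (j + 1 + 1) = n - (j + 1) by omega, Nat.factorial_succ]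
    push_cast
    field_simp
    ring

theorem hasDerivAt_upperGammaPoly_mul_exp {c : ℝ} (hc : c ≠ 0) (n : ℕ) (u : ℝ) :
    HasDerivAt (fun u => upperGammaPoly n c u * exp (-c * u))
      (-(n * u ^ (n - 1) * exp (-c * u))) u := by
  have hexp : HasDerivAt (fun u => exp (-c * u)) (-c * exp (-c * u)) u := by
    simpa [mul_comm] using ((hasDerivAt_id u).const_mul (-c)).exp
  induction n with
  | zero => simpa [upperGammaPoly] using hasDerivAt_const u (0 : ℝ)
  | succ n ih =>
    have hsplit : (fun u => upperGammaPoly (n + 1) c u * exp (-c * u)) =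
        fun u => (n + 1) / c * (u ^ n * exp (-c * u) + upperGammaPoly n c u * exp (-c * u)) := by
      funext u
      rw [upperGammaPoly_succ hc]
      ring
    rw [hsplit]
    refine ((((hasDerivAt_pow n u).mul hexp).add ih).const_mul _).congr_deriv ?_
    push_cast
    field_simp
    ring

theorem tendsto_upperGammaPoly_mul_exp_atTop {c : ℝ} (hc : 0 < c) (n : ℕ) :
    Tendsto (fun u => upperGammaPoly n c u * exp (-c * u)) atTop (𝓝 0) := by
  simp only [upperGammaPoly, sum_mul]
  rw [← sum_const_zero (s := Icc 1 n)]
  refine tendsto_finsetSum _ fun i _ => ?_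
  simpa [mul_assoc, rpow_natCast] using
    (tendsto_rpow_mul_exp_neg_mul_atTop_nhds_zero (n - i : ℕ) c hc).const_mul
      (n.factorial / (n - i).factorial / c ^ i : ℝ)

theorem hasDerivAt_upperGammaPoly_mul_exp_rpow {c : ℝ} (hc : c ≠ 0) {n : ℕ} (hn : n ≠ 0)
    (s : ℝ) {x : ℝ} (hx : 0 < x) :
    HasDerivAt (fun x => upperGammaPoly n c (x ^ s) * exp (-c * x ^ s))
      (-(n * s) * x ^ (n * s - 1) * exp (-c * x ^ s)) x := by
  refine ((hasDerivAt_upperGammaPoly_mul_exp hc n _).comp x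
    (hasDerivAt_rpow_const (p := s) (Or.inl hx.ne'))).congr_deriv ?_
  have hpow : (x ^ s) ^ (n - 1) * x ^ (s - 1) = x ^ (n * s - 1) := by
    rw [← rpow_mul_natCast hx.le, ← rpow_add hx, Nat.cast_sub (Nat.one_le_iff_ne_zero.mpr hn)]
    ring_nf
  rw [← hpow]
  ring

/-- closed form for `∫_a^∞ x exp(-c x^{2/K}) dx`. -/
theorem integral_x_exp_neg_rpow (a c : ℝ) (ha : 0 < a) (hc : 0 < c) (K : ℕ) (hK : 1 ≤ K) :
    ∫ x in Set.Ioi a, x * Real.exp (-c * x ^ ((2 : ℝ) / K)) =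
      (1 / 2) * ∑ i ∈ Finset.Icc 1 K,
        ((K.factorial : ℝ) / ((K - i).factorial : ℝ) / c ^ i) *
          a ^ (2 * ((K : ℝ) - (i : ℝ)) / K) * Real.exp (-c * a ^ ((2 : ℝ) / K)) := by
  have hK0 : K ≠ 0 := Nat.one_le_iff_ne_zero.mp hK
  have hKs : (K : ℝ) * (2 / K) = 2 := mul_div_cancel₀ 2 (Nat.cast_ne_zero.mpr hK0)
  set F : ℝ → ℝ := fun x => -(1 / 2) * (upperGammaPoly K c (x ^ ((2 : ℝ) / K)) *
    exp (-c * x ^ ((2 : ℝ) / K)))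
  have hF : ∀ x ∈ Set.Ici a, HasDerivAt F (x * exp (-c * x ^ ((2 : ℝ) / K))) x := fun x hx =>
    ((hasDerivAt_upperGammaPoly_mul_exp_rpow hc.ne' hK0 _ (ha.trans_le hx)).const_mul _).congr_deriv
      (by rw [hKs, show (2 : ℝ) - 1 = 1 by norm_num, rpow_one]; ring)
  have hF_lim : Tendsto F atTop (𝓝 0) := by
    have h2K : (0 : ℝ) < 2 / K := by positivity
    rw [← mul_zero (-(1 / 2) : ℝ)]
    exact ((tendsto_upperGammaPoly_mul_exp_atTop hc K).comp (tendsto_rpow_atTop h2K)).const_mul _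
  rw [integral_Ioi_of_hasDerivAt_of_nonneg' hF (fun x hx => by positivity [ha.trans hx]) hF_lim]
  simp only [F, upperGammaPoly, sum_mul, zero_sub, neg_mul, neg_neg]
  congr 1
  refine sum_congr rfl fun i hi => ?_
  rw [← rpow_mul_natCast ha.le, Nat.cast_sub (mem_Icc.mp hi).2]
  ring_nf
end

section
/- Let χ_k be a chi-square random variable with k degrees of freedom, i.e. χ_k = Σ_{j=1}^{k} Z_j² where Z_1,…,Z_k are i.i.d. standard Gaussians. Then for every x > 0, P(χ_k ≥ k + 2√(xk) + 2x) ≤ exp(−x). -/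
/-!
Chernoff's method. For `λ < 1/2` the moment generating function of `Z²`, with `Z` a standard
Gaussian, is `(1 - 2λ)^(-1/2)`, so that of `χ_k` is its `k`-th power. Writing `x = k s²` and
taking `λ = s / (1 + 2s)`, the Chernoff bound `exp (-λ t) (1 - 2λ)^(-k/2)` at the threshold
`t = k (1 + 2s + 2s²)` is at most `exp (-x)` by the elementary inequality
`√(1 + 2s) ≤ exp (s (1 + s) / (1 + 2s))`.
-/

open MeasureTheory ProbabilityTheory Finset Real

lemma gaussianPDFReal_zero_one_mul_exp_mul_sq (l z : ℝ) :
    gaussianPDFReal 0 1 z * exp (l * z ^ 2) = (√(2 * π))⁻¹ * exp (-(1 / 2 - l) * z ^ 2) := by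
  simp only [gaussianPDFReal_def, NNReal.coe_one, mul_one, sub_zero]
  rw [mul_assoc, ← exp_add]
  congr 2
  ring

lemma integrable_exp_mul_sq_gaussianReal {l : ℝ} (hl : l < 1 / 2) :
    Integrable (fun z => exp (l * z ^ 2)) (gaussianReal 0 1) := by
  rw [gaussianReal_of_var_ne_zero 0 one_ne_zero,
    integrable_withDensity_iff_integrable_smul' (measurable_gaussianPDF 0 1)
      (ae_of_all _ fun _ => gaussianPDF_lt_top)]
  simp_rw [toReal_gaussianPDF, smul_eq_mul, gaussianPDFReal_zero_one_mul_exp_mul_sq]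
  exact (integrable_exp_neg_mul_sq (by linarith)).const_mul _

lemma mgf_sq_gaussianReal {l : ℝ} (hl : l < 1 / 2) :
    mgf (fun z => z ^ 2) (gaussianReal 0 1) l = (√(1 - 2 * l))⁻¹ := by
  simp_rw [mgf, integral_gaussianReal_eq_integral_smul one_ne_zero, smul_eq_mul,
    gaussianPDFReal_zero_one_mul_exp_mul_sq, integral_const_mul, integral_gaussian]
  rw [← sqrt_inv, ← sqrt_inv, ← sqrt_mul (by positivity)]
  have : 1 - 2 * l ≠ 0 := by linarith
  congr 1
  field_simp

section Pi

variable {ι Ω : Type*} [Fintype ι] {mΩ : MeasurableSpace Ω} {μ : Measure Ω} [SigmaFinite μ]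
  {X : Ω → ℝ} {t : ℝ}

lemma mgf_sum_comp_pi :
    mgf (fun z : ι → Ω => ∑ i, X (z i)) (Measure.pi fun _ => μ) t =
      mgf X μ t ^ Fintype.card ι := by
  simp only [mgf, mul_sum, exp_sum]
  exact integral_fintype_prod_eq_pow (μ := μ) fun ω => exp (t * X ω)

lemma MeasureTheory.Integrable.exp_mul_sum_comp_pi (h : Integrable (fun ω => exp (t * X ω)) μ) :
    Integrable (fun z : ι → Ω => exp (t * ∑ i, X (z i))) (Measure.pi fun _ => μ) := by
  simp only [mul_sum, exp_sum]
  exact Integrable.fintype_prod fun _ => h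

end Pi

lemma measureReal_pi_gaussianReal_sum_sq_ge_le {ι : Type*} [Fintype ι] {l : ℝ} (hl₀ : 0 ≤ l)
    (hl : l < 1 / 2) (ε : ℝ) :
    (Measure.pi fun _ : ι => gaussianReal 0 1).real {z | ε ≤ ∑ i, z i ^ 2} ≤
      exp (-l * ε) * (√(1 - 2 * l))⁻¹ ^ Fintype.card ι := by
  have h := measure_ge_le_exp_mul_mgf ε hl₀
    ((integrable_exp_mul_sq_gaussianReal hl).exp_mul_sum_comp_pi (ι := ι))
  rwa [mgf_sum_comp_pi (X := fun z => z ^ 2), mgf_sq_gaussianReal hl] at h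

lemma sqrt_one_add_two_mul_le_exp {s : ℝ} (hs : 0 ≤ s) :
    √(1 + 2 * s) ≤ exp (s * (1 + s) / (1 + 2 * s)) := by
  set b := 2 * s * (1 + s) / (1 + 2 * s)
  have hgap : 1 + 2 * s ≤ 1 + b + b ^ 2 / 2 := by
    have : 1 + b + b ^ 2 / 2 - (1 + 2 * s) = 2 * s ^ 4 / (1 + 2 * s) ^ 2 := by
      simp only [b]
      field_simp
      ring
    linarith [show 0 ≤ 2 * s ^ 4 / (1 + 2 * s) ^ 2 by positivity]
  calc √(1 + 2 * s) ≤ √(exp b) :=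
        sqrt_le_sqrt (hgap.trans (quadratic_le_exp_of_nonneg (by positivity)))
    _ = exp (s * (1 + s) / (1 + 2 * s)) := by
        rw [← exp_half]
        congr 1
        ring

lemma pi_gaussianReal_sum_sq_ge_card_mul_le {ι : Type*} [Fintype ι] {s : ℝ} (hs : 0 ≤ s) :
    (Measure.pi fun _ : ι => gaussianReal 0 1)
        {z | Fintype.card ι * (1 + 2 * s + 2 * s ^ 2) ≤ ∑ i, z i ^ 2} ≤
      ENNReal.ofReal (exp (-(Fintype.card ι * s ^ 2))) := by
  set n := Fintype.card ι
  have h₁ : 0 < 1 + 2 * s := by linarith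
  set l := s / (1 + 2 * s)
  have hl : 1 - 2 * l = (1 + 2 * s)⁻¹ := by
    simp only [l]
    field_simp
    ring
  have hl_lt : l < 1 / 2 := by
    rw [div_lt_div_iff₀ h₁ two_pos]
    linarith
  rw [← ofReal_measureReal]
  refine ENNReal.ofReal_le_ofReal ?_
  calc _ ≤ exp (-l * (n * (1 + 2 * s + 2 * s ^ 2))) * (√(1 - 2 * l))⁻¹ ^ n :=
        measureReal_pi_gaussianReal_sum_sq_ge_le (by positivity) hl_lt _
    _ = exp (-l * (n * (1 + 2 * s + 2 * s ^ 2))) * √(1 + 2 * s) ^ n := by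
        rw [hl, sqrt_inv, inv_inv]
    _ ≤ exp (-l * (n * (1 + 2 * s + 2 * s ^ 2))) * exp (s * (1 + s) / (1 + 2 * s)) ^ n := by
        gcongr
        exact sqrt_one_add_two_mul_le_exp hs
    _ = exp (-(n * s ^ 2)) := by
        rw [← exp_nat_mul, ← exp_add]
        congr 1
        simp only [l]
        field_simp
        ring

/-- Laurent–Massart type tail bound for the chi-square distribution with `k`
degrees of freedom, realized as the law of `Σ_j Z_j²` for i.i.d. standard Gaussians. -/
theorem chi_square_tail_laurent_massart (k : ℕ) (x : ℝ) (hx : 0 < x) :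
    (Measure.pi fun _ : Fin k => gaussianReal 0 1)
        {z | (k : ℝ) + 2 * Real.sqrt (x * k) + 2 * x ≤ ∑ j, (z j) ^ 2} ≤
      ENNReal.ofReal (Real.exp (-x)) := by
  rcases k.eq_zero_or_pos with rfl | hk
  · simp [not_le.mpr (by positivity : 0 < 2 * x)]
  set s := √x / √k
  have hk_sq : √(k : ℝ) * √k = k := mul_self_sqrt (Nat.cast_nonneg k)
  have hks : (k : ℝ) * s = √(x * k) :=
    calc (k : ℝ) * s = √k * √k * (√x / √k) := by rw [hk_sq]
      _ = √(x * k) := by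
        have : 0 < √(k : ℝ) := by positivity
        rw [sqrt_mul hx.le]
        field_simp
  have hks2 : (k : ℝ) * s ^ 2 = x := by
    rw [← hk_sq, div_pow, sq_sqrt hx.le]
    field_simp
  have hthreshold : (k : ℝ) + 2 * √(x * k) + 2 * x = k * (1 + 2 * s + 2 * s ^ 2) := by
    rw [← hks, ← hks2]
    ring
  have h := pi_gaussianReal_sum_sq_ge_card_mul_le (ι := Fin k) (s := s) (by positivity)
  rwa [Fintype.card_fin, hks2, ← hthreshold] at h
end
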